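/- For every β < μ_1 and every j = 2, …, n, the vector b_j(β) is orthogonal to b_1(β) (with respect to the standard inner product on ℝⁿ) and satisfies D(β)·b_j(β) = b_j(β); moreover the vectors b_2(β), …, b_n(β) form a basis of the orthogonal complement of b_1(β) in ℝⁿ. -/
import Mathlib


/-- For every `β < μ 0` and every `j ≠ 0` (i.e. `j = 2, …, n` in 1-based
notation), the vector `b_j(β)` — with first coordinate `γ_j(β)`, `j`-th
coordinate `-γ_1(β)` and all other coordinates `0` — is orthogonal to
`b₁(β)` and satisfies `D(β) b_j(β) = b_j(β)`; moreover the vectors `b_j(β)`,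
`j ≠ 0`, form a basis (are linearly independent and span) of the orthogonal
complement of `b₁(β)` in `ℝⁿ`. -/
theorem stmt_9 (n : ℕ) (hn : 2 ≤ n) (μ : Fin n → ℝ) (hμpos : ∀ k, 0 < μ k)
    (hμmono : Monotone μ) (β : ℝ) (hβ : β < μ ⟨0, by omega⟩)
    (γ : Fin n → ℝ) (hγ : ∀ j, γ j = (Real.sqrt (μ j - β))⁻¹)
    (D : Matrix (Fin n) (Fin n) ℝ)
    (hD : ∀ i j, D i j =
      if i = j then μ i / (μ i - β) else β / Real.sqrt ((μ i - β) * (μ j - β)))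
    (b1 : Fin n → ℝ) (hb1 : ∀ j, b1 j = γ j)
    (b : Fin n → Fin n → ℝ)
    (hb : ∀ j : Fin n, j ≠ ⟨0, by omega⟩ → ∀ k, b j k =
      if k = ⟨0, by omega⟩ then γ j else if k = j then -γ ⟨0, by omega⟩ else 0) :
    (∀ j : Fin n, j ≠ ⟨0, by omega⟩ → ∑ k, b j k * b1 k = 0) ∧
    (∀ j : Fin n, j ≠ ⟨0, by omega⟩ → D.mulVec (b j) = b j) ∧
    LinearIndependent ℝ (fun j : {j : Fin n // j ≠ ⟨0, by omega⟩} => b j) ∧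
    (Submodule.span ℝ (Set.range (fun j : {j : Fin n // j ≠ ⟨0, by omega⟩} => b j))
        : Set (Fin n → ℝ)) = {v : Fin n → ℝ | ∑ k, v k * b1 k = 0} := by
  set z : Fin n := ⟨0, by omega⟩ with hz
  -- basic positivity
  have hpos : ∀ k, 0 < μ k - β := by
    intro k
    have : μ z ≤ μ k := hμmono (by simp [hz, Fin.le_def])
    linarith
  set s : Fin n → ℝ := fun k => Real.sqrt (μ k - β) with hs
  have hspos : ∀ k, 0 < s k := fun k => Real.sqrt_pos.2 (hpos k)
  have hsne : ∀ k, s k ≠ 0 := fun k => (hspos k).ne'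
  have hs2 : ∀ k, s k ^ 2 = μ k - β := fun k => Real.sq_sqrt (hpos k).le
  have hγ' : ∀ k, γ k = (s k)⁻¹ := fun k => hγ k
  have hγne : ∀ k, γ k ≠ 0 := by
    intro k; rw [hγ' k]; exact inv_ne_zero (hsne k)
  have hD' : ∀ i j, D i j = if i = j then (s i ^ 2 + β) / s i ^ 2
      else β / (s i * s j) := by
    intro i j
    rw [hD i j]
    by_cases h : i = j
    · simp only [h, if_true]
      rw [hs2 j]; ring_nf
    · simp only [h, if_false]
      rw [Real.sqrt_mul (hpos i).le]
  -- splitting lemma for sums against b j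
  have hsum2 : ∀ (f : Fin n → ℝ) (j : Fin n), j ≠ z →
      ∑ k, f k * b j k = f z * γ j + f j * (-γ z) := by
    intro f j hj
    have : ∀ k, f k * b j k =
        (if k = z then f z * γ j else 0) + (if k = j then f j * (-γ z) else 0) := by
      intro k
      rw [hb j hj k]
      by_cases h1 : k = z <;> by_cases h2 : k = j
      · exact absurd (h1 ▸ h2) (Ne.symm hj)
      · simp [h1, h2, (Ne.symm hj : z ≠ j)]
      · simp [h1, h2, hj]
      · simp [h1, h2]
    rw [Finset.sum_congr rfl (fun k _ => this k), Finset.sum_add_distrib]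
    simp
  -- Part 1: orthogonality
  have part1 : ∀ j : Fin n, j ≠ z → ∑ k, b j k * b1 k = 0 := by
    intro j hj
    have := hsum2 b1 j hj
    have e : ∀ k, b1 k * b j k = b j k * b1 k := fun k => mul_comm _ _
    calc ∑ k, b j k * b1 k = ∑ k, b1 k * b j k := by
          exact Finset.sum_congr rfl fun k _ => (mul_comm _ _)
      _ = b1 z * γ j + b1 j * (-γ z) := hsum2 b1 j hj
      _ = 0 := by rw [hb1, hb1]; ring
  refine ⟨part1, ?_, ?_, ?_⟩
  -- Part 2: eigenvector property
  · intro j hj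
    funext i
    rw [Matrix.mulVec, dotProduct]
    rw [hsum2 (fun k => D i k) j hj]
    rw [hb j hj i, hD' i z, hD' i j, hγ' j, hγ' z]
    by_cases h1 : i = z
    · subst h1
      simp only [if_true, if_pos rfl]
      rw [if_neg (Ne.symm hj)]
      field_simp [hsne]
      ring
    · rw [if_neg h1]
      by_cases h2 : i = j
      · subst h2
        rw [if_neg h1, if_pos rfl, if_pos rfl]
        field_simp [hsne]
        ring
      · rw [if_neg h2, if_neg h1, if_neg h2]
        field_simp [hsne]
        ring
  -- Part 3: linear independence
  · rw [Fintype.linearIndependent_iff]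
    intro g hg j
    have := congrFun hg (j : Fin n)
    simp only [Finset.sum_apply, Pi.smul_apply, smul_eq_mul, Pi.zero_apply] at this
    have hsingle : ∑ i : {j : Fin n // j ≠ z}, g i * b i (j : Fin n)
        = g j * (-γ z) := by
      rw [Finset.sum_eq_single j]
      · rw [hb j j.2 (j : Fin n), if_neg j.2, if_pos rfl]
      · intro i _ hij
        rw [hb i i.2 (j : Fin n), if_neg j.2, if_neg, mul_zero]
        intro h
        exact hij (Subtype.ext h.symm)
      · intro h; exact absurd (Finset.mem_univ j) h
    rw [hsingle] at this
    have : g j * γ z = 0 := by linarith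
    exact (mul_eq_zero.1 this).resolve_right (hγne z)
  -- Part 4: span
  · ext v
    simp only [SetLike.mem_coe, Set.mem_setOf_eq]
    constructor
    · intro hv
      -- span ⊆ kernel
      induction hv using Submodule.span_induction with
      | mem x hx =>
        obtain ⟨j, rfl⟩ := hx
        exact part1 j j.2
      | zero => simp
      | add x y _ _ hx hy =>
        simp only [Pi.add_apply, add_mul, Finset.sum_add_distrib, hx, hy, add_zero]
      | smul c x _ hx =>
        simp only [Pi.smul_apply, smul_eq_mul, mul_assoc, ← Finset.mul_sum, hx, mul_zero]
    · intro hv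
      -- construct explicit combination
      have hvz : ∑ i : {j : Fin n // j ≠ z}, v i * γ i = -(v z * γ z) := by
        have hsplit : ∑ k, v k * b1 k = v z * b1 z + ∑ k ∈ ({z}ᶜ : Finset (Fin n)), v k * b1 k :=
          Fintype.sum_eq_add_sum_compl z _
        have hsub : ∑ k ∈ ({z}ᶜ : Finset (Fin n)), v k * b1 k
            = ∑ i : {j : Fin n // j ≠ z}, v i * b1 i := by
          apply Finset.sum_subtype; simp
        rw [hv, hsub] at hsplit
        have : ∑ i : {j : Fin n // j ≠ z}, v i * b1 i = -(v z * b1 z) := by linarith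
        simpa only [hb1] using this
      have hveq : v = ∑ i : {j : Fin n // j ≠ z}, (-(v i) * s z) • b i := by
        funext k
        simp only [Finset.sum_apply, Pi.smul_apply, smul_eq_mul]
        by_cases hk : k = z
        · subst hk
          have : ∀ i : {j : Fin n // j ≠ z}, -(v i) * s z * b i z = -(s z) * (v i * γ i) := by
            intro i
            rw [hb i i.2 z, if_pos rfl]; ring
          rw [Finset.sum_congr rfl fun i _ => this i, ← Finset.mul_sum, hvz, hγ' z]
          field_simp [hsne]
        · rw [Finset.sum_eq_single ⟨k, hk⟩]
          · rw [hb k hk k, if_neg hk, if_pos rfl, hγ' z]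
            field_simp [hsne]
          · intro i _ hik
            rw [hb i i.2 k, if_neg hk, if_neg, mul_zero]
            intro h
            exact hik (Subtype.ext h.symm)
          · intro h; exact absurd (Finset.mem_univ _) h
      rw [hveq]
      exact Submodule.sum_mem _ fun i _ =>
        Submodule.smul_mem _ _ (Submodule.subset_span (Set.mem_range_self i))
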